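/- A countable discrete group G admits an amenable action by homeomorphisms on some compact metrizable space if and only if the canonical action of G on its Stone–Čech compactification βG is amenable. -/

import Mathlib

open MeasureTheory Filter Topology

/-- The space `P(G)` of probability measures on a (countable discrete) group `G`,
viewed inside `ℓ¹(G)`; it carries the weak topology (of pointwise convergence),
which on `P(G)` coincides with the `ℓ¹`-norm topology. -/
abbrev ProbOn (G : Type) : Type :=
  {f : G → ℝ // (∀ g : G, 0 ≤ f g) ∧ HasSum f 1}

/-- The left translation action of `G` on `P(G)`: `(g • p) h = p (g⁻¹ h)`. -/
noncomputable instance ProbOn.instSMul (G : Type) [Group G] : SMul G (ProbOn G) where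
  smul g p := ⟨fun h => p.1 (g⁻¹ * h), fun h => p.2.1 _, by
    have := ((Equiv.mulLeft g⁻¹).hasSum_iff (f := p.1) (a := 1)).mpr p.2.2
    first
      | exact this
      | simpa [Function.comp_def] using this⟩

/-- The `ℓ¹` distance between two elements of `P(G)`. -/
noncomputable def l1dist {G : Type} (p q : ProbOn G) : ℝ :=
  ∑' g : G, |p.1 g - q.1 g|

/-- An action of a (discrete) group `G` by homeomorphisms on a topological space `X` is
amenable if there is a sequence of continuous maps `bⁿ : X → P(G)` such that for every
`g ∈ G`, `lim_n sup_{x ∈ X} ‖g • bⁿ_x − bⁿ_{g•x}‖₁ = 0`. -/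
def AmenableActionOn (G : Type) [Group G] (X : Type) [TopologicalSpace X]
    [MulAction G X] : Prop :=
  (∀ g : G, Continuous fun x : X => g • x) ∧
  ∃ b : ℕ → C(X, ProbOn G), ∀ g : G,
    Tendsto (fun n : ℕ => ⨆ x : X, l1dist (g • (b n) x) ((b n) (g • x)))
      atTop (𝓝 0)

/-- A group `G` is amenable at infinity (topologically amenable) if it admits an amenable
action on some nonempty compact Hausdorff space. -/
def AmenableAtInfinity (G : Type) [Group G] : Prop :=
  ∃ (X : Type) (tX : TopologicalSpace X) (aX : MulAction G X),
    @CompactSpace X tX ∧ @T2Space X tX ∧ Nonempty X ∧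
      @AmenableActionOn G _ X tX aX

/-- The canonical extension to `βG` of left translation by `g`. -/
noncomputable def stoneCechTranslate (G : Type) [Group G] [TopologicalSpace G]
    [DiscreteTopology G] (g : G) : StoneCech G → StoneCech G :=
  stoneCechExtend
    (continuous_of_discreteTopology :
      Continuous fun x : G => stoneCechUnit (g * x))


/-!
If `G` acts amenably on a nonempty compact metrizable `X`, fix `x₀ ∈ X`: the orbit map
`g ↦ g • x₀` extends to a continuous `G`-equivariant map `βG → X`, and precomposing the maps
`bⁿ` with it can only decrease the translation defects `sup_x ‖g • bⁿ_x − bⁿ_{g • x}‖₁`.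

Conversely, given maps `bⁿ` on `βG`, send `y ∈ βG` to its orbit profile
`(bⁿ(h • y))_{(n, h) ∈ ℕ × G}` in `P(G)^(ℕ × G)`, which is metrizable because `G` is countable.
The image of `βG` is compact, and right translation of the `G`-coordinate makes it a `G`-space
for which the profile map is equivariant; evaluation at `(n, 1)` then gives maps on the image
with the same translation defects as the `bⁿ`.
-/

lemma l1dist_nonneg {G : Type} (p q : ProbOn G) : 0 ≤ l1dist p q :=
  tsum_nonneg fun _ => abs_nonneg _

lemma l1dist_le_two {G : Type} (p q : ProbOn G) : l1dist p q ≤ 2 := by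
  have hp : Summable p.1 := p.2.2.summable
  have hq : Summable q.1 := q.2.2.summable
  calc l1dist p q ≤ ∑' g, (p.1 g + q.1 g) := by
        refine (hp.sub hq).abs.tsum_le_tsum (fun g => ?_) (hp.add hq)
        calc |p.1 g - q.1 g| ≤ |p.1 g| + |q.1 g| := abs_sub _ _
          _ = p.1 g + q.1 g := by rw [abs_of_nonneg (p.2.1 g), abs_of_nonneg (q.2.1 g)]
    _ = 2 := by rw [hp.tsum_add hq, p.2.2.tsum_eq, q.2.2.tsum_eq]; norm_num

instance ProbOn.metrizableSpace (G : Type) [Countable G] :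
    TopologicalSpace.MetrizableSpace (ProbOn G) :=
  IsEmbedding.subtypeVal.metrizableSpace

section TranslationDefect

variable {G : Type} [Group G] {X Y : Type} [TopologicalSpace X] [TopologicalSpace Y]
  [MulAction G X] [MulAction G Y]

noncomputable def translationDefect (b : C(X, ProbOn G)) (g : G) : ℝ :=
  ⨆ x, l1dist (g • b x) (b (g • x))

lemma translationDefect_nonneg (b : C(X, ProbOn G)) (g : G) : 0 ≤ translationDefect b g :=
  Real.iSup_nonneg fun _ => l1dist_nonneg _ _

lemma translationDefect_comp_le {φ : C(Y, X)} (hφ : ∀ (g : G) y, φ (g • y) = g • φ y)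
    (b : C(X, ProbOn G)) (g : G) : translationDefect (b.comp φ) g ≤ translationDefect b g := by
  have hbdd : BddAbove (Set.range fun x => l1dist (g • b x) (b (g • x))) :=
    ⟨2, by rintro _ ⟨x, rfl⟩; exact l1dist_le_two _ _⟩
  refine Real.iSup_le (fun y => ?_) (translationDefect_nonneg b g)
  simpa only [ContinuousMap.comp_apply, hφ, translationDefect] using le_ciSup hbdd (φ y)

lemma translationDefect_comp_of_surjective {φ : C(Y, X)} (hφ : ∀ (g : G) y, φ (g • y) = g • φ y)
    (hφs : Function.Surjective φ) (b : C(X, ProbOn G)) (g : G) :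
    translationDefect (b.comp φ) g = translationDefect b g := by
  simp only [translationDefect, ContinuousMap.comp_apply, hφ]
  exact hφs.iSup_comp fun x => l1dist (g • b x) (b (g • x))

theorem AmenableActionOn.comap [ContinuousConstSMul G Y] {φ : C(Y, X)}
    (hφ : ∀ (g : G) y, φ (g • y) = g • φ y) (h : AmenableActionOn G X) :
    AmenableActionOn G Y := by
  obtain ⟨-, b, hb⟩ := h
  exact ⟨continuous_const_smul, fun n => (b n).comp φ, fun g => squeeze_zero
    (fun n => translationDefect_nonneg _ g) (fun n => translationDefect_comp_le hφ (b n) g) (hb g)⟩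

theorem AmenableActionOn.of_surjective_comp [ContinuousConstSMul G X] {φ : C(Y, X)}
    (hφ : ∀ (g : G) y, φ (g • y) = g • φ y) (hφs : Function.Surjective φ)
    {b : ℕ → C(Y, ProbOn G)} (hb : ∀ g, Tendsto (fun n => translationDefect (b n) g) atTop (𝓝 0))
    (c : ℕ → C(X, ProbOn G)) (hcb : ∀ n, (c n).comp φ = b n) : AmenableActionOn G X :=
  ⟨continuous_const_smul, c, fun g => (hb g).congr fun n => by
    rw [← hcb, translationDefect_comp_of_surjective hφ hφs]; rfl⟩

end TranslationDefect

section StoneCech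

variable {G : Type} [Group G] [TopologicalSpace G] [DiscreteTopology G]

lemma stoneCechTranslate_stoneCechUnit (g s : G) :
    stoneCechTranslate G g (stoneCechUnit s) = stoneCechUnit (g * s) :=
  congrFun (stoneCechExtend_extends _) s

lemma continuous_stoneCechTranslate (g : G) : Continuous (stoneCechTranslate G g) :=
  continuous_stoneCechExtend _

lemma stoneCechTranslate_one : stoneCechTranslate G 1 = id :=
  stoneCech_hom_ext (continuous_stoneCechTranslate 1) continuous_id <| funext fun s => by
    simp only [Function.comp_apply, stoneCechTranslate_stoneCechUnit, one_mul, id]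

lemma stoneCechTranslate_mul (g h : G) :
    stoneCechTranslate G (g * h) = stoneCechTranslate G g ∘ stoneCechTranslate G h :=
  stoneCech_hom_ext (continuous_stoneCechTranslate _)
    ((continuous_stoneCechTranslate g).comp (continuous_stoneCechTranslate h)) <| funext fun s => by
      simp only [Function.comp_apply, stoneCechTranslate_stoneCechUnit, mul_assoc]

noncomputable instance StoneCech.instMulAction : MulAction G (StoneCech G) where
  smul := stoneCechTranslate G
  one_smul y := congrFun stoneCechTranslate_one y
  mul_smul g h y := congrFun (stoneCechTranslate_mul g h) y

lemma StoneCech.smul_def (g : G) (y : StoneCech G) : g • y = stoneCechTranslate G g y := rfl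

instance StoneCech.instContinuousConstSMul : ContinuousConstSMul G (StoneCech G) :=
  ⟨continuous_stoneCechTranslate⟩

lemma stoneCechExtend_orbit_smul {X : Type} [TopologicalSpace X] [CompactSpace X] [T2Space X]
    [MulAction G X] (hX : ∀ g : G, Continuous fun x : X => g • x) (x₀ : X) (g : G)
    (y : StoneCech G) :
    stoneCechExtend (continuous_of_discreteTopology (f := fun s : G => s • x₀)) (g • y) =
      g • stoneCechExtend (continuous_of_discreteTopology (f := fun s : G => s • x₀)) y := by
  refine congrFun (stoneCech_hom_ext (g₁ := fun y => stoneCechExtend _ (g • y))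
    ((continuous_stoneCechExtend _).comp (continuous_const_smul g))
    ((hX g).comp (continuous_stoneCechExtend _)) (funext fun s => ?_)) y
  simp only [Function.comp_apply, StoneCech.smul_def, stoneCechTranslate_stoneCechUnit,
    stoneCechExtend_stoneCechUnit, mul_smul]

theorem AmenableActionOn.stoneCech {X : Type} [TopologicalSpace X] [CompactSpace X] [T2Space X]
    [MulAction G X] (x₀ : X) (h : AmenableActionOn G X) : AmenableActionOn G (StoneCech G) :=
  h.comap (φ := ⟨_, continuous_stoneCechExtend _⟩) (stoneCechExtend_orbit_smul h.1 x₀)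

end StoneCech

section OrbitProfile

variable {G : Type} [Group G] {Y : Type} [TopologicalSpace Y] [MulAction G Y]

def orbitProfile (b : ℕ → C(Y, ProbOn G)) (y : Y) : ℕ × G → ProbOn G :=
  fun p => b p.1 (p.2 • y)

variable (b : ℕ → C(Y, ProbOn G))

lemma orbitProfile_smul (g : G) (y : Y) :
    orbitProfile b (g • y) = fun p => orbitProfile b y (p.1, p.2 * g) :=
  funext fun p => by simp only [orbitProfile, mul_smul]

lemma continuous_orbitProfile [ContinuousConstSMul G Y] : Continuous (orbitProfile b) :=
  continuous_pi fun p => (b p.1).continuous.comp (continuous_const_smul p.2)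

lemma orbitProfile_shift_mem_range {z : ℕ × G → ProbOn G} (hz : z ∈ Set.range (orbitProfile b))
    (g : G) : (fun p => z (p.1, p.2 * g)) ∈ Set.range (orbitProfile b) := by
  obtain ⟨y, rfl⟩ := hz
  exact ⟨g • y, orbitProfile_smul b g y⟩

instance orbitProfile.instMulActionRange : MulAction G (Set.range (orbitProfile b)) where
  smul g z := ⟨fun p => z.1 (p.1, p.2 * g), orbitProfile_shift_mem_range b z.2 g⟩
  one_smul z := Subtype.ext <| funext fun p => congrArg z.1 (Prod.ext rfl (mul_one p.2))
  mul_smul g h z :=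
    Subtype.ext <| funext fun p => congrArg z.1 (Prod.ext rfl (mul_assoc p.2 g h).symm)

instance orbitProfile.instContinuousConstSMulRange :
    ContinuousConstSMul G (Set.range (orbitProfile b)) :=
  ⟨fun g => (continuous_pi fun p =>
    (continuous_apply (p.1, p.2 * g)).comp continuous_subtype_val).subtype_mk _⟩

lemma rangeFactorization_orbitProfile_smul (g : G) (y : Y) :
    Set.rangeFactorization (orbitProfile b) (g • y) =
      g • Set.rangeFactorization (orbitProfile b) y :=
  Subtype.ext (orbitProfile_smul b g y)

theorem exists_compact_metrizable_amenableActionOn [Countable G] [CompactSpace Y] [Nonempty Y]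
    [ContinuousConstSMul G Y]
    (hb : ∀ g, Tendsto (fun n => translationDefect (b n) g) atTop (𝓝 0)) :
    ∃ (X : Type) (tX : TopologicalSpace X) (aX : MulAction G X),
      @CompactSpace X tX ∧ @TopologicalSpace.MetrizableSpace X tX ∧ Nonempty X ∧
        @AmenableActionOn G _ X tX aX := by
  have hcont : Continuous (Set.rangeFactorization (orbitProfile b)) :=
    (continuous_orbitProfile b).subtype_mk _
  refine ⟨Set.range (orbitProfile b), inferInstance, inferInstance,
    isCompact_iff_compactSpace.mp (isCompact_range (continuous_orbitProfile b)), inferInstance,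
    inferInstance,
    AmenableActionOn.of_surjective_comp (φ := ⟨_, hcont⟩)
      (rangeFactorization_orbitProfile_smul b) Set.rangeFactorization_surjective
      hb (fun n => ⟨fun z => z.1 (n, 1), (continuous_apply (n, 1)).comp continuous_subtype_val⟩)
      fun n => ?_⟩
  ext1 y
  simp only [ContinuousMap.comp_apply, ContinuousMap.coe_mk, Set.rangeFactorization_coe,
    orbitProfile, one_smul]

end OrbitProfile

/-- A countable discrete group `G` admits an amenable action by homeomorphisms on some
compact metrizable space if and only if the canonical action of `G` on its Stone–Čech
compactification `βG` is amenable. -/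
theorem amenable_action_on_compact_metrizable_iff_stoneCech_action_amenable
    (G : Type) [Group G] [Countable G] [TopologicalSpace G] [DiscreteTopology G] :
    (∃ (X : Type) (tX : TopologicalSpace X) (aX : MulAction G X),
      @CompactSpace X tX ∧ @TopologicalSpace.MetrizableSpace X tX ∧ Nonempty X ∧
        @AmenableActionOn G _ X tX aX) ↔
    (∃ b : ℕ → C(StoneCech G, ProbOn G), ∀ g : G,
      Tendsto
        (fun n : ℕ =>
          ⨆ x : StoneCech G, l1dist (g • (b n) x) ((b n) (stoneCechTranslate G g x)))
        atTop (𝓝 0)) := by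
  constructor
  · rintro ⟨X, tX, aX, hXc, hXm, ⟨x₀⟩, hX⟩
    exact (hX.stoneCech x₀).2
  · rintro ⟨b, hb⟩
    have : Nonempty (StoneCech G) := ⟨stoneCechUnit 1⟩
    exact exists_compact_metrizable_amenableActionOn b hb
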